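/- arXiv:2210.03648 — 3 statements merged into one kernel-verified Lean document; each statement's English description precedes it below -/
import Mathlib

section
/- If H is a locally compact subgyrogroup of a Hausdorff topological gyrogroup G (that is, H with the subspace topology is a locally compact space), then H is closed in G. -/
universe u

/-- A gyrogroup: a groupoid with identity, inverses, gyroautomorphisms satisfying the
left gyroassociative law and the left loop property. -/
class Gyrogroup (G : Type u) where
  add : G → G → G
  zero : G
  neg : G → G
  gyr : G → G → G → G
  zero_add : ∀ x, add zero x = x
  add_zero : ∀ x, add x zero = x
  neg_add : ∀ x, add (neg x) x = zero
  add_neg : ∀ x, add x (neg x) = zero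
  gyr_bijective : ∀ a b, Function.Bijective (gyr a b)
  gyr_add : ∀ a b x y, gyr a b (add x y) = add (gyr a b x) (gyr a b y)
  gyrassoc : ∀ a b z, add a (add b z) = add (add a b) (gyr a b z)
  loop : ∀ a b, gyr (add a b) b = gyr a b

/-- A topological gyrogroup: the operation is jointly continuous and inversion is continuous. -/
class TopologicalGyrogroup (G : Type u) [TopologicalSpace G] [Gyrogroup G] : Prop where
  continuous_add : Continuous fun p : G × G => Gyrogroup.add p.1 p.2
  continuous_neg : Continuous (Gyrogroup.neg : G → G)

/-- `H` is a subgyrogroup of `G` (by the subgyrogroup criterion: nonempty and closed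
under the operation and inversion; this is equivalent to `(H, ⊕|H)` being itself a
gyrogroup whose gyroautomorphisms are the restrictions of those of `G`). -/
structure IsSubgyrogroup {G : Type u} [Gyrogroup G] (H : Set G) : Prop where
  nonempty : H.Nonempty
  add_mem : ∀ ⦃a⦄, a ∈ H → ∀ ⦃b⦄, b ∈ H → Gyrogroup.add a b ∈ H
  neg_mem : ∀ ⦃a⦄, a ∈ H → Gyrogroup.neg a ∈ H

/-- An `L`-subgyrogroup: a subgyrogroup with `gyr[a,h](H) = H` for all `a ∈ G`, `h ∈ H`. -/
structure IsLSubgyrogroup {G : Type u} [Gyrogroup G] (H : Set G)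
    extends IsSubgyrogroup H : Prop where
  gyr_image : ∀ (a : G), ∀ ⦃h⦄, h ∈ H → Gyrogroup.gyr a h '' H = H

/-- A strongly `L`-subgyrogroup: a subgyrogroup with `gyr[a,b](H) ⊆ H` for all `a, b ∈ G`. -/
structure IsStronglyLSubgyrogroup {G : Type u} [Gyrogroup G] (H : Set G)
    extends IsSubgyrogroup H : Prop where
  gyr_image_subset : ∀ a b : G, Gyrogroup.gyr a b '' H ⊆ H

/-- The pointwise sum `A ⊕ B = {a ⊕ b : a ∈ A, b ∈ B}` of two subsets. -/
def setAdd {G : Type u} [Gyrogroup G] (A B : Set G) : Set G :=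
  Set.image2 Gyrogroup.add A B

/-- The left coset `a ⊕ H = {a ⊕ h : h ∈ H}`. -/
def lCoset {G : Type u} [Gyrogroup G] (H : Set G) (a : G) : Set G :=
  (fun h => Gyrogroup.add a h) '' H

/-- The setoid on `G` identifying points with the same left coset modulo `H`. -/
def cosetSetoid {G : Type u} [Gyrogroup G] (H : Set G) : Setoid G :=
  ⟨fun x y => lCoset H x = lCoset H y,
   ⟨fun _ => rfl, fun h => h.symm, fun h₁ h₂ => h₁.trans h₂⟩⟩

/-- The coset space `G/H`, carrying the quotient topology: a set `O ⊆ G/H` is open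
iff `π⁻¹(O)` is open in `G`. -/
abbrev GyroQuot {G : Type u} [Gyrogroup G] (H : Set G) : Type u :=
  Quotient (cosetSetoid H)

/-- The natural quotient map `π : G → G/H`, `a ↦ a ⊕ H`. -/
def qmap {G : Type u} [Gyrogroup G] (H : Set G) (a : G) : GyroQuot H :=
  Quotient.mk (cosetSetoid H) a

namespace GyroAux

open Gyrogroup

variable {G : Type u} [Gyrogroup G]

lemma aux1 (a x : G) : add (neg a) (add a x) = gyr (neg a) a x := by
  rw [Gyrogroup.gyrassoc, Gyrogroup.neg_add, Gyrogroup.zero_add]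

lemma cancel_left {a x y : G} (h : add a x = add a y) : x = y := by
  have h2 := congrArg (add (neg a)) h
  rw [aux1, aux1] at h2
  exact (gyr_bijective (neg a) a).injective h2

lemma gyr_zero_left (b z : G) : gyr zero b z = z := by
  have h := gyrassoc (G := G) zero b z
  rw [Gyrogroup.zero_add, Gyrogroup.zero_add] at h
  exact (cancel_left h).symm

lemma gyr_neg_self (a z : G) : gyr (neg a) a z = z := by
  have h := loop (G := G) (neg a) a
  rw [Gyrogroup.neg_add] at h
  rw [← h]
  exact gyr_zero_left a z

lemma gyr_self_neg (a z : G) : gyr a (neg a) z = z := by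
  have h := loop (G := G) a (neg a)
  rw [Gyrogroup.add_neg] at h
  rw [← h]
  exact gyr_zero_left (neg a) z

lemma neg_add_cancel_left (a x : G) : add (neg a) (add a x) = x := by
  rw [aux1, gyr_neg_self]

lemma add_neg_cancel_left (a x : G) : add a (add (neg a) x) = x := by
  rw [Gyrogroup.gyrassoc, Gyrogroup.add_neg, Gyrogroup.zero_add, gyr_self_neg]

lemma gyr_eq (a b c : G) : gyr a b c = add (neg (add a b)) (add a (add b c)) := by
  rw [Gyrogroup.gyrassoc a b c, GyroAux.neg_add_cancel_left]

lemma right_cancel_sol {x a b : G} (h : add x a = b) : x = add b (gyr b a (neg a)) := by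
  subst h
  rw [Gyrogroup.loop, ← Gyrogroup.gyrassoc, Gyrogroup.add_neg, Gyrogroup.add_zero]

variable [TopologicalSpace G] [TopologicalGyrogroup G]

lemma cont_left (a : G) : Continuous (fun y : G => add a y) :=
  TopologicalGyrogroup.continuous_add.comp (continuous_const.prodMk continuous_id)

lemma isOpenMap_add_left (a : G) : IsOpenMap (fun y : G => add a y) :=
  (Homeomorph.mk
    ⟨fun y => add a y, fun y => add (neg a) y,
     neg_add_cancel_left a, add_neg_cancel_left a⟩
    (cont_left a) (cont_left (neg a))).isOpenMap

end GyroAux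

/-- A locally compact subgyrogroup of a Hausdorff topological gyrogroup
is closed. -/
theorem stmt_6 {G : Type u} [Gyrogroup G] [TopologicalSpace G] [TopologicalGyrogroup G]
    [T2Space G] (H : Set G) (hH : IsSubgyrogroup H) (hlc : LocallyCompactSpace H) :
    IsClosed H := by
  open Gyrogroup GyroAux in
  -- closure H is closed under the operations
  have hK_add : ∀ a ∈ closure H, ∀ b ∈ closure H, add a b ∈ closure H := by
    intro a ha b hb
    exact map_mem_closure₂ TopologicalGyrogroup.continuous_add ha hb
      (fun u hu v hv => hH.add_mem hu hv)
  have hK_neg : ∀ a ∈ closure H, neg a ∈ closure H := by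
    intro a ha
    exact map_mem_closure TopologicalGyrogroup.continuous_neg ha
      (fun u hu => hH.neg_mem hu)
  -- H is open in closure H, by local compactness
  have key : ∀ x ∈ H, ∃ U : Set G, IsOpen U ∧ x ∈ U ∧ U ∩ closure H ⊆ H := by
    intro x hx
    obtain ⟨Kc, hKc, hKn⟩ := exists_compact_mem_nhds (⟨x, hx⟩ : H)
    rw [nhds_subtype_eq_comap, Filter.mem_comap] at hKn
    obtain ⟨t, ht, hts⟩ := hKn
    obtain ⟨U, hUt, hUo, hxU⟩ := mem_nhds_iff.mp ht
    refine ⟨U, hUo, hxU, ?_⟩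
    have himg : IsClosed (Subtype.val '' Kc) :=
      (hKc.image continuous_subtype_val).isClosed
    have h1 : U ∩ H ⊆ Subtype.val '' Kc := by
      rintro y ⟨hyU, hyH⟩
      exact ⟨⟨y, hyH⟩, hts (hUt hyU), rfl⟩
    calc U ∩ closure H ⊆ closure (U ∩ H) := hUo.inter_closure
      _ ⊆ closure (Subtype.val '' Kc) := closure_mono h1
      _ = Subtype.val '' Kc := himg.closure_eq
      _ ⊆ H := by rintro y ⟨⟨y', hy'⟩, _, rfl⟩; exact hy'
  choose U hUo hxU hUsub using key
  set U' : Set G := ⋃ x, ⋃ hx : x ∈ H, U x hx with hU'def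
  have hU'o : IsOpen U' := isOpen_iUnion (fun x => isOpen_iUnion (fun hx => hUo x hx))
  have hHU' : H ⊆ U' := by
    intro x hx
    exact Set.mem_iUnion.mpr ⟨x, Set.mem_iUnion.mpr ⟨hx, hxU x hx⟩⟩
  have hU'H : U' ∩ closure H ⊆ H := by
    rintro y ⟨hyU', hycl⟩
    obtain ⟨x, hm⟩ := Set.mem_iUnion.mp hyU'
    obtain ⟨hx, hyU⟩ := Set.mem_iUnion.mp hm
    exact hUsub x hx ⟨hyU, hycl⟩
  -- main argument: closure H ⊆ H
  have main : closure H ⊆ H := by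
    intro x hx
    obtain ⟨h₀, hh₀⟩ := hH.nonempty
    have hnegx : neg x ∈ closure H := hK_neg x hx
    -- the open set x ⊕ U' contains x ⊕ h₀ ∈ closure H, hence meets H
    have hVo : IsOpen ((fun y => add x y) '' U') := isOpenMap_add_left x U' hU'o
    have hpV : add x h₀ ∈ (fun y => add x y) '' U' := ⟨h₀, hHU' hh₀, rfl⟩
    have hpcl : add x h₀ ∈ closure H := hK_add x hx h₀ (subset_closure hh₀)
    obtain ⟨h', hh'V, hh'H⟩ :=
      (_root_.mem_closure_iff.mp hpcl _ hVo hpV)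
    obtain ⟨u, huU', huv⟩ := hh'V
    -- u = ⊖x ⊕ h' lies in closure H, hence in U' ∩ closure H ⊆ H
    have hu_eq : u = add (neg x) h' := by
      rw [← huv]
      exact (GyroAux.neg_add_cancel_left x u).symm
    have hucl : u ∈ closure H := by
      rw [hu_eq]
      exact hK_add _ hnegx _ (subset_closure hh'H)
    have huH : u ∈ H := hU'H ⟨huU', hucl⟩
    -- from x ⊕ u = h' conclude x = h' ⊕ gyr h' u (⊖u) ∈ H
    have hx_eq : x = add h' (gyr h' u (neg u)) := right_cancel_sol huv
    have hgyrH : gyr h' u (neg u) ∈ H := by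
      rw [gyr_eq]
      exact hH.add_mem (hH.neg_mem (hH.add_mem hh'H huH))
        (hH.add_mem hh'H (hH.add_mem huH (hH.neg_mem huH)))
    rw [hx_eq]
    exact hH.add_mem hh'H hgyrH
  have : H = closure H := Set.Subset.antisymm subset_closure main
  rw [this]
  exact isClosed_closure
end

section
/- Let G be a topological gyrogroup, H a closed strongly L-subgyrogroup of G, X a subset of G with the subspace topology, π : G → G/H the natural quotient mapping, and Y = π(X) with the subspace topology of G/H. If the subspace H of G and the subspace Y of G/H are both first-countable, then X is first-countable. -/
universe u

section Aux

open Filter Set Topology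

variable {G : Type u} [Gyrogroup G]

local infixl:65 " ⊹ " => Gyrogroup.add
local prefix:max "∸" => Gyrogroup.neg

theorem gyro_add_left_cancel {a x y : G} (h : (a ⊹ x) = a ⊹ y) : x = y := by
  have e : ∀ z : G, (∸a ⊹ (a ⊹ z)) = Gyrogroup.gyr (∸a) a z := fun z => by
    rw [Gyrogroup.gyrassoc, Gyrogroup.neg_add, Gyrogroup.zero_add]
  have h2 : Gyrogroup.gyr (∸a) a x = Gyrogroup.gyr (∸a) a y := by
    rw [← e, ← e, h]
  exact (Gyrogroup.gyr_bijective (∸a) a).1 h2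

theorem gyr_zero_left (b z : G) : Gyrogroup.gyr Gyrogroup.zero b z = z := by
  have h : (b ⊹ Gyrogroup.gyr Gyrogroup.zero b z) = b ⊹ z := by
    calc (b ⊹ Gyrogroup.gyr Gyrogroup.zero b z)
        = ((Gyrogroup.zero ⊹ b) ⊹ Gyrogroup.gyr Gyrogroup.zero b z) := by
          rw [Gyrogroup.zero_add]
      _ = (Gyrogroup.zero ⊹ (b ⊹ z)) := (Gyrogroup.gyrassoc _ _ _).symm
      _ = (b ⊹ z) := Gyrogroup.zero_add _
  exact gyro_add_left_cancel h

theorem gyr_neg_self (a z : G) : Gyrogroup.gyr (∸a) a z = z := by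
  have h := congrFun (Gyrogroup.loop (∸a) a) z
  rw [Gyrogroup.neg_add] at h
  rw [← h]
  exact gyr_zero_left a z

theorem gyr_self_neg (a z : G) : Gyrogroup.gyr a (∸a) z = z := by
  have h := congrFun (Gyrogroup.loop a (∸a)) z
  rw [Gyrogroup.add_neg] at h
  rw [← h]
  exact gyr_zero_left (∸a) z

theorem gyro_left_cancel (a b : G) : (∸a ⊹ (a ⊹ b)) = b := by
  rw [Gyrogroup.gyrassoc, Gyrogroup.neg_add, Gyrogroup.zero_add, gyr_neg_self]

theorem gyro_left_cancel' (a b : G) : (a ⊹ (∸a ⊹ b)) = b := by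
  rw [Gyrogroup.gyrassoc, Gyrogroup.add_neg, Gyrogroup.zero_add, gyr_self_neg]

theorem gyro_right_cancel_gyr (x h : G) :
    ((x ⊹ h) ⊹ Gyrogroup.gyr x h (∸h)) = x := by
  rw [← Gyrogroup.gyrassoc, Gyrogroup.add_neg, Gyrogroup.add_zero]

theorem zero_mem_of_sub {H : Set G} (hH : IsSubgyrogroup H) : Gyrogroup.zero ∈ H := by
  obtain ⟨h, hh⟩ := hH.nonempty
  have := hH.add_mem (hH.neg_mem hh) hh
  rwa [Gyrogroup.neg_add] at this

theorem gyr_mem {H : Set G} (hH : IsStronglyLSubgyrogroup H) (a b : G) {h : G} (hh : h ∈ H) :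
    Gyrogroup.gyr a b h ∈ H :=
  hH.gyr_image_subset a b ⟨h, hh, rfl⟩

theorem mem_lCoset_self {H : Set G} (hH : IsStronglyLSubgyrogroup H) (x : G) :
    x ∈ lCoset H x :=
  ⟨Gyrogroup.zero, zero_mem_of_sub hH.toIsSubgyrogroup, Gyrogroup.add_zero x⟩

theorem lCoset_subset_lCoset_add {H : Set G} (hH : IsStronglyLSubgyrogroup H)
    {h : G} (hh : h ∈ H) (x : G) : lCoset H x ⊆ lCoset H (x ⊹ h) := by
  rintro y ⟨h'', hh'', rfl⟩
  refine ⟨Gyrogroup.gyr x h (∸h ⊹ h''),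
    gyr_mem hH _ _ (hH.add_mem (hH.neg_mem hh) hh''), ?_⟩
  show ((x ⊹ h) ⊹ Gyrogroup.gyr x h (∸h ⊹ h'')) = (x ⊹ h'')
  rw [← Gyrogroup.gyrassoc, gyro_left_cancel']

theorem lCoset_add {H : Set G} (hH : IsStronglyLSubgyrogroup H)
    {h : G} (hh : h ∈ H) (x : G) : lCoset H (x ⊹ h) = lCoset H x := by
  refine subset_antisymm ?_ (lCoset_subset_lCoset_add hH hh x)
  have hd : Gyrogroup.gyr x h (∸h) ∈ H := gyr_mem hH _ _ (hH.neg_mem hh)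
  have := lCoset_subset_lCoset_add hH hd (x ⊹ h)
  rwa [gyro_right_cancel_gyr] at this

theorem qmap_eq_iff {H : Set G} (hH : IsStronglyLSubgyrogroup H) {a b : G} :
    qmap H a = qmap H b ↔ ∃ h ∈ H, a = (b ⊹ h) := by
  constructor
  · intro e
    have hrel : lCoset H a = lCoset H b := Quotient.exact e
    have : a ∈ lCoset H b := hrel ▸ mem_lCoset_self hH a
    obtain ⟨h, hh, hba⟩ := this
    exact ⟨h, hh, hba.symm⟩
  · rintro ⟨h, hh, rfl⟩
    exact Quotient.sound (lCoset_add hH hh b)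

variable [TopologicalSpace G] [TopologicalGyrogroup G]

theorem cont_gadd : Continuous fun p : G × G => (p.1 ⊹ p.2) :=
  TopologicalGyrogroup.continuous_add

theorem cont_lAdd (a : G) : Continuous fun y : G => (a ⊹ y) :=
  cont_gadd.comp (continuous_const.prodMk continuous_id)

theorem cont_rAdd (h : G) : Continuous fun y : G => (y ⊹ h) :=
  cont_gadd.comp (continuous_id.prodMk continuous_const)

theorem image_lAdd_eq (a : G) (S : Set G) :
    (fun y : G => (a ⊹ y)) '' S = (fun y : G => (∸a ⊹ y)) ⁻¹' S := by
  ext z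
  constructor
  · rintro ⟨s, hs, rfl⟩
    simpa [gyro_left_cancel] using hs
  · intro hz
    exact ⟨(∸a ⊹ z), hz, gyro_left_cancel' a z⟩

theorem isOpen_image_lAdd (a : G) {S : Set G} (hS : IsOpen S) :
    IsOpen ((fun y : G => (a ⊹ y)) '' S) := by
  rw [image_lAdd_eq]
  exact hS.preimage (cont_gadd.comp (continuous_const.prodMk continuous_id))

theorem cont_qmap (H : Set G) : Continuous (qmap H) :=
  continuous_coinduced_rng

theorem isOpen_qmap_image {H : Set G} (hH : IsStronglyLSubgyrogroup H)
    {U : Set G} (hU : IsOpen U) : IsOpen (qmap H '' U) := by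
  have hpre : qmap H ⁻¹' (qmap H '' U) = ⋃ h ∈ H, (fun y : G => (y ⊹ h)) ⁻¹' U := by
    ext z
    simp only [Set.mem_preimage, Set.mem_image, Set.mem_iUnion]
    constructor
    · rintro ⟨u, hu, he⟩
      obtain ⟨h, hh, rfl⟩ := (qmap_eq_iff hH).mp he
      exact ⟨h, hh, hu⟩
    · rintro ⟨h, hh, hz⟩
      exact ⟨(z ⊹ h), hz, Quotient.sound (lCoset_add hH hh z)⟩
  have : IsOpen (qmap H ⁻¹' (qmap H '' U)) := by
    rw [hpre]
    exact isOpen_biUnion fun h _ => hU.preimage (cont_rAdd h)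
  exact isOpen_coinduced.mpr this

theorem gyro_shrink (x : G) {T : Set G} (hT : IsOpen T) (h0 : Gyrogroup.zero ∈ T) :
    ∃ V : Set G, IsOpen V ∧ Gyrogroup.zero ∈ V ∧
      ∀ a ∈ V, ∀ b ∈ V, (∸(x ⊹ a) ⊹ (x ⊹ b)) ∈ T := by
  have hc : Continuous fun p : G × G => (∸(x ⊹ p.1) ⊹ (x ⊹ p.2)) := by
    have h1 : Continuous fun p : G × G => (x ⊹ p.1) :=
      cont_gadd.comp (continuous_const.prodMk continuous_fst)
    have h2 : Continuous fun p : G × G => (x ⊹ p.2) :=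
      cont_gadd.comp (continuous_const.prodMk continuous_snd)
    exact cont_gadd.comp ((TopologicalGyrogroup.continuous_neg.comp h1).prodMk h2)
  have h00 : ((Gyrogroup.zero, Gyrogroup.zero) : G × G) ∈
      (fun p : G × G => (∸(x ⊹ p.1) ⊹ (x ⊹ p.2))) ⁻¹' T := by
    simp only [Set.mem_preimage, Gyrogroup.add_zero, Gyrogroup.neg_add]
    exact h0
  obtain ⟨V₁, V₂, h1o, h2o, h1m, h2m, hsub⟩ :=
    isOpen_prod_iff.mp (hT.preimage hc) _ _ h00
  exact ⟨V₁ ∩ V₂, h1o.inter h2o, ⟨h1m, h2m⟩,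
    fun a ha b hb => hsub (Set.mk_mem_prod ha.1 hb.2)⟩

theorem firstCountable_main {H : Set G} (hH : IsStronglyLSubgyrogroup H) (X : Set G)
    (h1 : FirstCountableTopology H)
    (h2 : FirstCountableTopology (qmap H '' X)) :
    FirstCountableTopology X := by
  haveI := h1; haveI := h2
  constructor
  rintro ⟨x, hxX⟩
  have h0H : Gyrogroup.zero ∈ H := zero_mem_of_sub hH.toIsSubgyrogroup
  -- a countable "base" of open sets of `G` tracing a neighborhood base of `0` in `H`
  obtain ⟨s, hs⟩ := (𝓝 (⟨Gyrogroup.zero, h0H⟩ : H)).exists_antitone_basis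
  have hOn : ∀ n : ℕ, ∃ O : Set G, IsOpen O ∧ Gyrogroup.zero ∈ O ∧
      (Subtype.val ⁻¹' O : Set H) ⊆ s n := by
    intro n
    have hmem : s n ∈ 𝓝 (⟨Gyrogroup.zero, h0H⟩ : H) := hs.toHasBasis.mem_of_mem trivial
    rw [nhds_subtype] at hmem
    obtain ⟨S, hS, hsub⟩ := Filter.mem_comap.mp hmem
    obtain ⟨O, hOS, hOopen, hO0⟩ := mem_nhds_iff.mp hS
    exact ⟨O, hOopen, hO0, fun a ha => hsub (hOS ha)⟩
  choose O hOopen hO0 hOsub using hOn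
  have hbaseH : ∀ T : Set G, IsOpen T → Gyrogroup.zero ∈ T →
      ∃ n, ∀ a ∈ H, a ∈ O n → a ∈ T := by
    intro T hT h0T
    have hmem : (Subtype.val ⁻¹' T : Set H) ∈ 𝓝 (⟨Gyrogroup.zero, h0H⟩ : H) := by
      rw [nhds_subtype]
      exact Filter.preimage_mem_comap (hT.mem_nhds h0T)
    obtain ⟨n, -, hn⟩ := hs.toHasBasis.mem_iff.mp hmem
    exact ⟨n, fun a haH haO => hn (hOsub n (show (⟨a, haH⟩ : H) ∈ _ from haO))⟩
  -- a countable "base" of open sets of `G/H` tracing a neighborhood base of `π x` in `Y`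
  have hyY : qmap H x ∈ qmap H '' X := ⟨x, hxX, rfl⟩
  obtain ⟨s', hs'⟩ := (𝓝 (⟨qmap H x, hyY⟩ : qmap H '' X)).exists_antitone_basis
  have hWm : ∀ m : ℕ, ∃ W : Set (GyroQuot H), IsOpen W ∧ qmap H x ∈ W ∧
      (Subtype.val ⁻¹' W : Set (qmap H '' X)) ⊆ s' m := by
    intro m
    have hmem : s' m ∈ 𝓝 (⟨qmap H x, hyY⟩ : qmap H '' X) := hs'.toHasBasis.mem_of_mem trivial
    rw [nhds_subtype] at hmem
    obtain ⟨S, hS, hsub⟩ := Filter.mem_comap.mp hmem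
    obtain ⟨W, hWS, hWopen, hW0⟩ := mem_nhds_iff.mp hS
    exact ⟨W, hWopen, hW0, fun a ha => hsub (hWS ha)⟩
  choose W hWopen hWmem hWsub using hWm
  have hbaseY : ∀ T : Set (GyroQuot H), IsOpen T → qmap H x ∈ T →
      ∃ m, ∀ y ∈ qmap H '' X, y ∈ W m → y ∈ T := by
    intro T hT h0T
    have hmem : (Subtype.val ⁻¹' T : Set (qmap H '' X)) ∈ 𝓝 (⟨qmap H x, hyY⟩ : qmap H '' X) := by
      rw [nhds_subtype]
      exact Filter.preimage_mem_comap (hT.mem_nhds h0T)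
    obtain ⟨m, -, hm⟩ := hs'.toHasBasis.mem_iff.mp hmem
    exact ⟨m, fun y hyY' hyW => hm (hWsub m (show (⟨y, hyY'⟩ : qmap H '' X) ∈ _ from hyW))⟩
  -- the recursive sequence of open neighborhoods of `0`
  have hU : ∃ U : ℕ → Set G, (∀ n, IsOpen (U n)) ∧ (∀ n, Gyrogroup.zero ∈ U n) ∧
      (∀ n, ∀ a ∈ U (n + 1), ∀ b ∈ U (n + 1), (∸(x ⊹ a) ⊹ (x ⊹ b)) ∈ U n ∩ O n) := by
    have step : ∀ (n : ℕ) (p : {V : Set G // IsOpen V ∧ Gyrogroup.zero ∈ V}),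
        ∃ V : Set G, IsOpen V ∧ Gyrogroup.zero ∈ V ∧
          ∀ a ∈ V, ∀ b ∈ V, (∸(x ⊹ a) ⊹ (x ⊹ b)) ∈ p.1 ∩ O n := fun n p =>
      gyro_shrink x (p.2.1.inter (hOopen n)) ⟨p.2.2, hO0 n⟩
    let F : ℕ → {V : Set G // IsOpen V ∧ Gyrogroup.zero ∈ V} := fun n =>
      Nat.rec ⟨Set.univ, isOpen_univ, Set.mem_univ _⟩
        (fun n p => ⟨(step n p).choose, (step n p).choose_spec.1, (step n p).choose_spec.2.1⟩) n
    refine ⟨fun n => (F n).1, fun n => (F n).2.1, fun n => (F n).2.2, fun n => ?_⟩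
    exact (step n (F n)).choose_spec.2.2
  obtain ⟨U, hUopen, hU0, hUg⟩ := hU
  -- the countable basis
  have hxmem : ∀ n : ℕ, x ∈ (fun y : G => (x ⊹ y)) '' U n := fun n =>
    ⟨Gyrogroup.zero, hU0 n, Gyrogroup.add_zero x⟩
  have key : ∀ S ∈ 𝓝[X] x, ∃ nm : ℕ × ℕ,
      ((fun y : G => (x ⊹ y)) '' U nm.1) ∩ (qmap H ⁻¹' W nm.2) ∩ X ⊆ S := by
    intro S hS
    obtain ⟨Oo, hOoOpen, hxOo, hOoX⟩ := mem_nhdsWithin.mp hS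
    have hx0 : ((x, Gyrogroup.zero) : G × G) ∈ (fun p : G × G => (p.1 ⊹ p.2)) ⁻¹' Oo := by
      simpa only [Set.mem_preimage, Gyrogroup.add_zero] using hxOo
    obtain ⟨A, Bn, hAopen, hBopen, hxA, h0B, hABsub⟩ :=
      isOpen_prod_iff.mp (hOoOpen.preimage cont_gadd) _ _ hx0
    obtain ⟨k, hk⟩ := hbaseH Bn hBopen h0B
    set n := k + 1 with hn
    set U' : Set G := A ∩ ((fun y : G => (x ⊹ y)) '' U n) with hU'
    have hU'open : IsOpen U' := hAopen.inter (isOpen_image_lAdd x (hUopen n))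
    have hxU' : x ∈ U' := ⟨hxA, hxmem n⟩
    have hW'open : IsOpen (qmap H '' U') := isOpen_qmap_image hH hU'open
    obtain ⟨m, hm⟩ := hbaseY _ hW'open (Set.mem_image_of_mem _ hxU')
    refine ⟨(n, m), ?_⟩
    rintro x' ⟨⟨⟨v, hvU, hxv⟩, hx'W⟩, hx'X⟩
    have hx'Y : qmap H x' ∈ qmap H '' X := ⟨x', hx'X, rfl⟩
    obtain ⟨u, huU', hqu⟩ := hm _ hx'Y hx'W
    obtain ⟨h, hhH, hx'uh⟩ := (qmap_eq_iff hH).mp hqu.symm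
    obtain ⟨huA, v', hv'U, huv⟩ := huU'
    have hh2 : h = (∸u ⊹ x') := by rw [hx'uh, gyro_left_cancel]
    have hhO : h ∈ O k := by
      have hmem := (hUg k v' hv'U v hvU).2
      rw [hh2, ← huv, ← hxv]
      exact hmem
    have hx'O : x' ∈ Oo := by
      rw [hx'uh]
      exact hABsub (Set.mk_mem_prod huA (hk h hhH hhO))
    exact hOoX ⟨hx'O, hx'X⟩
  have hbasis : (𝓝[X] x).HasBasis (fun _ : ℕ × ℕ => True)
      (fun nm => ((fun y : G => (x ⊹ y)) '' U nm.1) ∩ (qmap H ⁻¹' W nm.2) ∩ X) := by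
    constructor
    intro S
    constructor
    · intro hS
      obtain ⟨nm, hsub⟩ := key S hS
      exact ⟨nm, trivial, hsub⟩
    · rintro ⟨nm, -, hsub⟩
      refine mem_nhdsWithin.mpr
        ⟨((fun y : G => (x ⊹ y)) '' U nm.1) ∩ (qmap H ⁻¹' W nm.2),
          (isOpen_image_lAdd x (hUopen nm.1)).inter ((hWopen nm.2).preimage (cont_qmap H)),
          ⟨hxmem nm.1, hWmem nm.2⟩, hsub⟩
  haveI : (𝓝[X] x).IsCountablyGenerated := hbasis.isCountablyGenerated
  rw [nhds_subtype_eq_comap_nhdsWithin]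
  exact Filter.comap.isCountablyGenerated _ _


end Aux

/-- If `H` is a closed strongly L-subgyrogroup, `X ⊆ G`, `Y = π(X)`, and
both the subspace `H` and the subspace `Y ⊆ G/H` are first-countable, then `X` is
first-countable. -/
theorem stmt_12 {G : Type u} [Gyrogroup G] [TopologicalSpace G] [TopologicalGyrogroup G]
    (H : Set G) (hH : IsStronglyLSubgyrogroup H) (hcl : IsClosed H) (X : Set G)
    (h1 : FirstCountableTopology H)
    (h2 : FirstCountableTopology (qmap H '' X)) :
    FirstCountableTopology X :=
  firstCountable_main hH X h1 h2
end

section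
/- Let G be a Hausdorff topological gyrogroup, H a locally compact strongly L-subgyrogroup of G (i.e. H with the subspace topology is locally compact), and π : G → G/H the natural quotient mapping. Then there exists an open neighbourhood U of the neutral element 0 in G such that π(cl(U)) is closed in G/H and the restriction of π to cl(U) is a perfect mapping of cl(U) onto the subspace π(cl(U)). -/
universe u

/-!
Local compactness of `H` gives a neighbourhood `V` of `0` and a compact `K ⊆ H` with
`V ∩ H ⊆ K`. This forces `H` to be closed, and a closed set `S` with `⊖S ⊕ S ⊆ V` meets each
coset `z ⊕ H` in a closed subset of `p ⊕ K`, `p` any point of the intersection, hence in a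
compact set. Choose `U` so small that `Ω ⊕ cl U` lies in such a closed `B` for a neighbourhood
`Ω` of `0`. If `F ⊆ cl U` is closed and `s = u ⊕ h` (`u ∈ F`, `h ∈ H`) is close to `x`, then
`x ⊟ s ∈ Ω`, so `(x ⊟ s) ⊕ u` lies in the compact set `B ∩ (x ⊕ H)`. Projecting along this
compact factor shows that `F ⊕ H = π⁻¹(π F)` is closed, so `π` is closed on `cl U`, and its
fibres `cl U ∩ (z ⊕ H)` are compact.
-/

open Topology Filter

theorem exists_isOpen_inter_subset_isCompact {X : Type*} [TopologicalSpace X] {H : Set X}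
    [LocallyCompactSpace H] {x : X} (hx : x ∈ H) :
    ∃ V, IsOpen V ∧ x ∈ V ∧ ∃ K, IsCompact K ∧ K ⊆ H ∧ V ∩ H ⊆ K := by
  obtain ⟨s, hs, hsx⟩ := exists_compact_mem_nhds (⟨x, hx⟩ : H)
  obtain ⟨N, hN, hNs⟩ := (mem_nhds_subtype H _ s).1 hsx
  refine ⟨interior N, isOpen_interior, mem_interior_iff_mem_nhds.2 hN, Subtype.val '' s,
    hs.image continuous_subtype_val, by simp, ?_⟩
  rintro y ⟨hyN, hyH⟩
  exact ⟨⟨y, hyH⟩, hNs (show y ∈ N from interior_subset hyN), rfl⟩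

theorem isProperMap_restrict_image {X Y : Type*} [TopologicalSpace X] [TopologicalSpace Y]
    {π : X → Y} {S : Set X} (hπ : Continuous π) (hS : IsClosed S)
    (himage : ∀ F ⊆ S, IsClosed F → IsClosed (π '' F))
    (hfiber : ∀ y, IsCompact (S ∩ π ⁻¹' {y})) :
    IsProperMap ((Set.mapsTo_image π S).restrict π S (π '' S)) := by
  rw [isProperMap_iff_isClosedMap_and_compact_fibers]
  refine ⟨(hπ.comp continuous_subtype_val).subtype_mk _, fun C hC => ?_, fun y => ?_⟩
  · have himg : (Set.mapsTo_image π S).restrict π S (π '' S) '' C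
        = Subtype.val ⁻¹' (π '' (Subtype.val '' C)) := by
      ext ⟨y, hy⟩
      simp [Set.MapsTo.restrict, Subtype.ext_iff, Subtype.map]
    rw [himg]
    exact (himage _ (Subtype.coe_image_subset S C) (hS.isClosedMap_subtype_val C hC)).preimage
      continuous_subtype_val
  · rw [Subtype.isCompact_iff]
    convert hfiber y using 1
    ext x
    simp [Set.MapsTo.restrict, Subtype.ext_iff, Subtype.map, and_comm]

local infixl:65 " ⊕ᵍ " => Gyrogroup.add
local prefix:max "⊖" => Gyrogroup.neg

namespace Gyrogroup

variable {G : Type u} [Gyrogroup G]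

theorem add_left_cancel {a x y : G} (h : a ⊕ᵍ x = a ⊕ᵍ y) : x = y := by
  have := congrArg (⊖a ⊕ᵍ ·) h
  simp only [gyrassoc (⊖a) a, neg_add, zero_add] at this
  exact (gyr_bijective _ _).1 this

theorem gyr_zero_left (b z : G) : gyr zero b z = z := by
  have := gyrassoc zero b z
  rw [zero_add, zero_add] at this
  exact (add_left_cancel this).symm

theorem gyr_neg_add_self (a z : G) : gyr (⊖a) a z = z := by
  rw [← loop (⊖a) a, neg_add, gyr_zero_left]

theorem gyr_add_neg_self (a z : G) : gyr a (⊖a) z = z := by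
  rw [← loop a (⊖a), add_neg, gyr_zero_left]

theorem neg_add_cancel_left (a b : G) : ⊖a ⊕ᵍ (a ⊕ᵍ b) = b := by
  rw [gyrassoc, neg_add, zero_add, gyr_neg_add_self]

theorem add_neg_cancel_left (a b : G) : a ⊕ᵍ (⊖a ⊕ᵍ b) = b := by
  rw [gyrassoc, add_neg, zero_add, gyr_add_neg_self]

theorem gyr_zero (a b : G) : gyr a b zero = zero :=
  add_left_cancel (a := gyr a b zero) (by rw [← gyr_add, zero_add, add_zero])

theorem gyr_eq (a b z : G) : gyr a b z = ⊖(a ⊕ᵍ b) ⊕ᵍ (a ⊕ᵍ (b ⊕ᵍ z)) := by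
  rw [gyrassoc a b z, neg_add_cancel_left]

theorem neg_add_add_eq_gyr (a b c : G) : ⊖(a ⊕ᵍ b) ⊕ᵍ (a ⊕ᵍ c) = gyr a b (⊖b ⊕ᵍ c) := by
  rw [gyr_eq, add_neg_cancel_left]

theorem gyr_leftInverse (a b : G) :
    Function.LeftInverse (gyr (a ⊕ᵍ b) (gyr a b (⊖b))) (gyr a b) := fun z => by
  apply add_left_cancel (a := (a ⊕ᵍ b) ⊕ᵍ gyr a b (⊖b))
  rw [← gyrassoc, ← gyr_add, ← gyrassoc, add_neg_cancel_left, ← gyrassoc, add_neg, add_zero]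

theorem add_right_cancel {x y a : G} (h : x ⊕ᵍ a = y ⊕ᵍ a) : x = y := by
  have key : ∀ x, (x ⊕ᵍ a) ⊕ᵍ gyr (x ⊕ᵍ a) a (⊖a) = x := fun x => by
    rw [loop, ← gyrassoc, add_neg, add_zero]
  rw [← key x, ← key y, h]

/-- Ungar's cosubtraction `b ⊟ a`. -/
def cosub (b a : G) : G := b ⊕ᵍ gyr b a (⊖a)

theorem cosub_add_cancel (b a : G) : cosub b a ⊕ᵍ a = b := by
  set w := gyr b a (⊖a)
  have hw : (b ⊕ᵍ a) ⊕ᵍ w = b := by rw [← gyrassoc, add_neg, add_zero]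
  have hloop : gyr b w = gyr (b ⊕ᵍ a) w := by
    have := loop (b ⊕ᵍ a) w
    rwa [hw] at this
  have ha : gyr b w (gyr b a a) = a := by rw [hloop]; exact gyr_leftInverse b a a
  calc cosub b a ⊕ᵍ a = (b ⊕ᵍ w) ⊕ᵍ gyr b w (gyr b a a) := by rw [ha]; rfl
    _ = b := by rw [← gyrassoc, ← gyr_add, neg_add, gyr_zero, add_zero]

theorem cosub_self (a : G) : cosub a a = zero :=
  add_right_cancel (by rw [cosub_add_cancel, zero_add])

section Subgyrogroup

variable {H : Set G}

theorem _root_.IsSubgyrogroup.zero_mem (hH : IsSubgyrogroup H) : zero ∈ H := by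
  obtain ⟨h, hh⟩ := hH.nonempty
  simpa only [neg_add] using hH.add_mem (hH.neg_mem hh) hh

theorem mem_lCoset_iff {a x : G} : x ∈ lCoset H a ↔ ⊖a ⊕ᵍ x ∈ H :=
  ⟨by rintro ⟨h, hh, rfl⟩; rwa [neg_add_cancel_left],
    fun hx => ⟨⊖a ⊕ᵍ x, hx, add_neg_cancel_left a x⟩⟩

variable (hH : IsStronglyLSubgyrogroup H)
include hH

theorem _root_.IsStronglyLSubgyrogroup.gyr_mem {h : G} (hh : h ∈ H) (a b : G) :
    gyr a b h ∈ H :=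
  hH.gyr_image_subset a b ⟨h, hh, rfl⟩

theorem _root_.IsStronglyLSubgyrogroup.gyr_mem_iff {a b h : G} : gyr a b h ∈ H ↔ h ∈ H :=
  ⟨fun hh => gyr_leftInverse a b h ▸ hH.gyr_mem hh _ _, fun hh => hH.gyr_mem hh a b⟩

theorem _root_.IsStronglyLSubgyrogroup.neg_add_mem_comm {a b : G} (hab : ⊖a ⊕ᵍ b ∈ H) :
    ⊖b ⊕ᵍ a ∈ H := by
  have key := neg_add_add_eq_gyr a (⊖a ⊕ᵍ b) zero
  rw [add_zero, add_neg_cancel_left, add_zero] at key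
  rw [key]
  exact hH.gyr_mem (hH.neg_mem hab) _ _

theorem _root_.IsStronglyLSubgyrogroup.neg_add_mem_trans {a b c : G} (hab : ⊖a ⊕ᵍ b ∈ H)
    (hbc : ⊖b ⊕ᵍ c ∈ H) : ⊖a ⊕ᵍ c ∈ H := by
  have key := neg_add_add_eq_gyr a (⊖a ⊕ᵍ b) (⊖a ⊕ᵍ c)
  rw [add_neg_cancel_left, add_neg_cancel_left] at key
  rw [key, hH.gyr_mem_iff] at hbc
  simpa only [add_neg_cancel_left] using hH.add_mem hab hbc

theorem _root_.IsStronglyLSubgyrogroup.neg_add_mem_of_mem_lCoset {z p q : G}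
    (hp : p ∈ lCoset H z) (hq : q ∈ lCoset H z) : ⊖p ⊕ᵍ q ∈ H :=
  hH.neg_add_mem_trans (hH.neg_add_mem_comm (mem_lCoset_iff.1 hp)) (mem_lCoset_iff.1 hq)

theorem _root_.IsStronglyLSubgyrogroup.qmap_eq_qmap_iff {x y : G} :
    qmap H x = qmap H y ↔ ⊖x ⊕ᵍ y ∈ H := by
  refine Quotient.eq.trans ⟨fun hxy => ?_, fun hxy => Set.ext fun z => ?_⟩
  · have hy : y ∈ lCoset H y := ⟨zero, hH.zero_mem, add_zero y⟩
    rw [← hxy] at hy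
    exact mem_lCoset_iff.1 hy
  · rw [mem_lCoset_iff, mem_lCoset_iff]
    exact ⟨hH.neg_add_mem_trans (hH.neg_add_mem_comm hxy), hH.neg_add_mem_trans hxy⟩

theorem _root_.IsStronglyLSubgyrogroup.preimage_qmap_image (A : Set G) :
    qmap H ⁻¹' (qmap H '' A) = setAdd A H := by
  ext x
  simp only [Set.mem_preimage, Set.mem_image, hH.qmap_eq_qmap_iff]
  exact ⟨fun ⟨a, ha, hx⟩ => ⟨a, ha, ⊖a ⊕ᵍ x, hx, add_neg_cancel_left a x⟩,
    fun ⟨a, ha, h, hh, hx⟩ => ⟨a, ha, by rwa [← hx, neg_add_cancel_left]⟩⟩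

theorem _root_.IsStronglyLSubgyrogroup.preimage_qmap_singleton (z : G) :
    qmap H ⁻¹' {qmap H z} = lCoset H z := by
  ext x
  rw [Set.mem_preimage, Set.mem_singleton_iff, hH.qmap_eq_qmap_iff, mem_lCoset_iff]
  exact ⟨hH.neg_add_mem_comm, hH.neg_add_mem_comm⟩

end Subgyrogroup

section Topology

variable [TopologicalSpace G]

theorem _root_.IsStronglyLSubgyrogroup.isClosed_qmap_image_iff {H : Set G}
    (hH : IsStronglyLSubgyrogroup H) {A : Set G} :
    IsClosed (qmap H '' A) ↔ IsClosed (setAdd A H) := by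
  rw [← hH.preimage_qmap_image]
  exact isQuotientMap_quotient_mk'.isClosed_preimage.symm

variable [TopologicalGyrogroup G]

section Continuity

variable {X : Type*} [TopologicalSpace X] {f g k : X → G}

@[fun_prop]
theorem _root_.Continuous.gyroAdd (hf : Continuous f) (hg : Continuous g) :
    Continuous fun x => f x ⊕ᵍ g x :=
  TopologicalGyrogroup.continuous_add.comp (hf.prodMk hg)

@[fun_prop]
theorem _root_.Continuous.gyroNeg (hf : Continuous f) : Continuous fun x => ⊖(f x) :=
  TopologicalGyrogroup.continuous_neg.comp hf

@[fun_prop]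
theorem _root_.Continuous.gyr (hf : Continuous f) (hg : Continuous g) (hk : Continuous k) :
    Continuous fun x => gyr (f x) (g x) (k x) := by
  simp only [gyr_eq]
  fun_prop

@[fun_prop]
theorem _root_.Continuous.cosub (hf : Continuous f) (hg : Continuous g) :
    Continuous fun x => cosub (f x) (g x) := by
  unfold Gyrogroup.cosub
  fun_prop

end Continuity

theorem exists_mem_nhds_add_subset {W : Set G} (hW : W ∈ 𝓝 zero) :
    ∃ Ω ∈ 𝓝 (zero : G), ∀ a ∈ Ω, ∀ b ∈ Ω, a ⊕ᵍ b ∈ W := by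
  have hc : ContinuousAt (fun p : G × G => p.1 ⊕ᵍ p.2) (zero, zero) := by fun_prop
  rw [ContinuousAt, zero_add, nhds_prod_eq] at hc
  exact eventually_prod_self_iff.1 (hc hW)

theorem exists_mem_nhds_neg_add_subset {W : Set G} (hW : W ∈ 𝓝 zero) :
    ∃ Ω ∈ 𝓝 (zero : G), ∀ a ∈ Ω, ∀ b ∈ Ω, ⊖a ⊕ᵍ b ∈ W := by
  have hc : ContinuousAt (fun p : G × G => ⊖p.1 ⊕ᵍ p.2) (zero, zero) := by fun_prop
  rw [ContinuousAt, neg_add, nhds_prod_eq] at hc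
  exact eventually_prod_self_iff.1 (hc hW)

theorem closure_subset_setAdd {A W : Set G} (hW : W ∈ 𝓝 zero) : closure A ⊆ setAdd A W := by
  intro x hx
  have hN : (fun a => ⊖a ⊕ᵍ x) ⁻¹' W ∈ 𝓝 x :=
    ContinuousAt.preimage_mem_nhds (by fun_prop) (by rwa [neg_add])
  obtain ⟨a, haW, haA⟩ := mem_closure_iff_nhds.1 hx _ hN
  exact ⟨a, haA, ⊖a ⊕ᵍ x, haW, add_neg_cancel_left a x⟩

theorem exists_mem_nhds_closure_subset {W : Set G} (hW : W ∈ 𝓝 zero) :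
    ∃ Ω ∈ 𝓝 (zero : G), closure Ω ⊆ W := by
  obtain ⟨Ω, hΩ, hΩW⟩ := exists_mem_nhds_add_subset hW
  refine ⟨Ω, hΩ, (closure_subset_setAdd hΩ).trans ?_⟩
  rintro _ ⟨a, ha, b, hb, rfl⟩
  exact hΩW a ha b hb

variable {H : Set G}

theorem _root_.IsSubgyrogroup.isClosed_of_locallyCompactSpace [T2Space G]
    (hH : IsSubgyrogroup H) [LocallyCompactSpace H] : IsClosed H := by
  obtain ⟨V, hV, hV0, K, hK, hKH, hVK⟩ := exists_isOpen_inter_subset_isCompact hH.zero_mem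
  refine isClosed_of_closure_subset fun x hx => ?_
  have hN : (fun s => ⊖s ⊕ᵍ x) ⁻¹' V ∈ 𝓝 x :=
    ContinuousAt.preimage_mem_nhds (by fun_prop) (by rw [neg_add]; exact hV.mem_nhds hV0)
  obtain ⟨h, hhV, hh⟩ := mem_closure_iff_nhds.1 hx _ hN
  have hy : ⊖h ⊕ᵍ x ∈ closure H :=
    map_mem_closure (by fun_prop) hx fun k hk => hH.add_mem (hH.neg_mem hh) hk
  have hyK : ⊖h ⊕ᵍ x ∈ K := by
    rw [← hK.isClosed.closure_eq]
    exact closure_mono hVK (hV.inter_closure ⟨hhV, hy⟩)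
  simpa only [add_neg_cancel_left] using hH.add_mem hh (hKH hyK)

theorem isClosed_lCoset (hHc : IsClosed H) (z : G) : IsClosed (lCoset H z) := by
  have : lCoset H z = (fun x => ⊖z ⊕ᵍ x) ⁻¹' H := Set.ext fun x => mem_lCoset_iff
  rw [this]
  exact hHc.preimage (by fun_prop)

variable (hH : IsStronglyLSubgyrogroup H)
include hH

theorem _root_.IsStronglyLSubgyrogroup.isCompact_inter_lCoset (hHc : IsClosed H)
    {K S : Set G} (hK : IsCompact K) (hS : IsClosed S)
    (hSK : ∀ p ∈ S, ∀ q ∈ S, ⊖p ⊕ᵍ q ∈ H → ⊖p ⊕ᵍ q ∈ K) (z : G) :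
    IsCompact (S ∩ lCoset H z) := by
  rcases (S ∩ lCoset H z).eq_empty_or_nonempty with hempty | ⟨p, hpS, hpz⟩
  · rw [hempty]
    exact isCompact_empty
  refine (hK.image (f := (p ⊕ᵍ ·)) (by fun_prop)).of_isClosed_subset
    (hS.inter (isClosed_lCoset hHc z)) ?_
  rintro q ⟨hqS, hqz⟩
  exact ⟨⊖p ⊕ᵍ q, hSK p hpS q hqS (hH.neg_add_mem_of_mem_lCoset hpz hqz),
    add_neg_cancel_left p q⟩

theorem _root_.IsStronglyLSubgyrogroup.isClosed_setAdd (hHc : IsClosed H) {F B Ω : Set G}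
    (hF : IsClosed F) (hΩ : Ω ∈ 𝓝 zero) (hΩF : ∀ a ∈ Ω, ∀ u ∈ F, a ⊕ᵍ u ∈ B)
    (hB : ∀ z, IsCompact (B ∩ lCoset H z)) : IsClosed (setAdd F H) := by
  refine isClosed_of_closure_subset fun x hx => ?_
  have : CompactSpace ↥(B ∩ lCoset H x) := isCompact_iff_compactSpace.1 (hB x)
  -- `C` is `{(u ⊕ h, (x ⊟ (u ⊕ h)) ⊕ u) : u ∈ F, h ∈ H}` in the coordinates `(s, ζ)`
  let u : G × ↥(B ∩ lCoset H x) → G := fun p => ⊖(cosub x p.1) ⊕ᵍ p.2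
  let C : Set (G × ↥(B ∩ lCoset H x)) := {p | u p ∈ F ∧ ⊖(u p) ⊕ᵍ p.1 ∈ H}
  have hC : IsClosed C := (hF.preimage (by fun_prop)).inter (hHc.preimage (by fun_prop))
  have hN : cosub x ⁻¹' Ω ∈ 𝓝 x :=
    ContinuousAt.preimage_mem_nhds (by fun_prop) (by rwa [cosub_self])
  have hsub : cosub x ⁻¹' Ω ∩ setAdd F H ⊆ Prod.fst '' C := by
    rintro _ ⟨hs, a, ha, h, hh, rfl⟩
    have hx : cosub x (a ⊕ᵍ h) ⊕ᵍ (a ⊕ᵍ h) ∈ lCoset H (cosub x (a ⊕ᵍ h) ⊕ᵍ a) :=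
      ⟨_, hH.gyr_mem hh _ _, (gyrassoc _ _ _).symm⟩
    rw [cosub_add_cancel] at hx
    have hζ : cosub x (a ⊕ᵍ h) ⊕ᵍ a ∈ B ∩ lCoset H x :=
      ⟨hΩF _ hs a ha, mem_lCoset_iff.2 (hH.neg_add_mem_comm (mem_lCoset_iff.1 hx))⟩
    refine ⟨(a ⊕ᵍ h, ⟨_, hζ⟩), ?_, rfl⟩
    simp only [C, u, Set.mem_ofPred_eq, neg_add_cancel_left]
    exact ⟨ha, hh⟩
  have hxC : x ∈ closure (Prod.fst '' C) := mem_closure_iff_nhds.2 fun M hM => by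
    obtain ⟨s, ⟨hsM, hsN⟩, hs⟩ := mem_closure_iff_nhds.1 hx _ (inter_mem hM hN)
    exact ⟨s, hsM, hsub ⟨hsN, hs⟩⟩
  rw [(isClosedMap_fst_of_compactSpace C hC).closure_eq] at hxC
  obtain ⟨⟨s, ζ⟩, ⟨hζF, hζH⟩, rfl : s = x⟩ := hxC
  exact ⟨_, hζF, _, hζH, add_neg_cancel_left _ _⟩

end Topology

end Gyrogroup

/-- Let `G` be a Hausdorff topological gyrogroup and `H` a locally compact
strongly L-subgyrogroup. Then there is an open neighbourhood `U` of `0` such that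
`π(cl U)` is closed in `G/H` and the restriction of `π` to `cl U` is a perfect mapping
of `cl U` onto the subspace `π(cl U)`. -/
theorem stmt_15 {G : Type u} [Gyrogroup G] [TopologicalSpace G] [TopologicalGyrogroup G]
    [T2Space G] (H : Set G) (hH : IsStronglyLSubgyrogroup H)
    (hlc : LocallyCompactSpace H) :
    ∃ U : Set G, IsOpen U ∧ Gyrogroup.zero ∈ U ∧
      IsClosed (qmap H '' closure U) ∧
      ∀ f : ↥(closure U) → ↥(qmap H '' closure U),
        (∀ x : ↥(closure U), (f x : GyroQuot H) = qmap H x.1) →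
        Continuous f ∧ IsClosedMap f ∧ ∀ y, IsCompact (f ⁻¹' {y}) := by
  obtain ⟨V, hV, hV0, K, hK, hKH, hVK⟩ := exists_isOpen_inter_subset_isCompact hH.zero_mem
  have hHc : IsClosed H := hH.isClosed_of_locallyCompactSpace
  obtain ⟨W, hW, hWV⟩ := Gyrogroup.exists_mem_nhds_neg_add_subset (hV.mem_nhds hV0)
  obtain ⟨B, hB, hBW⟩ := Gyrogroup.exists_mem_nhds_closure_subset hW
  obtain ⟨Ω, hΩ, hΩB⟩ := Gyrogroup.exists_mem_nhds_add_subset hB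
  obtain ⟨U, hU, hUΩ⟩ := Gyrogroup.exists_mem_nhds_closure_subset hΩ
  have hplate : ∀ S ⊆ W, IsClosed S → ∀ z, IsCompact (S ∩ lCoset H z) := fun S hSW hS =>
    hH.isCompact_inter_lCoset hHc hK hS fun p hp q hq hpq => hVK ⟨hWV p (hSW hp) q (hSW hq), hpq⟩
  have hclUΩ : closure (interior U) ⊆ Ω := (closure_mono interior_subset).trans hUΩ
  have hΩclB : Ω ⊆ closure B := fun a ha => subset_closure <| by
    simpa only [Gyrogroup.add_zero] using hΩB a ha _ (mem_of_mem_nhds hΩ)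
  have himage : ∀ F ⊆ closure (interior U), IsClosed F → IsClosed (qmap H '' F) :=
    fun F hFU hF => hH.isClosed_qmap_image_iff.2 <| hH.isClosed_setAdd hHc hF hΩ
      (fun a ha u hu => subset_closure (hΩB a ha u (hclUΩ (hFU hu))))
      (hplate _ hBW isClosed_closure)
  have hfiber : ∀ y, IsCompact (closure (interior U) ∩ qmap H ⁻¹' {y}) := fun y => by
    obtain ⟨z, rfl⟩ : ∃ z, qmap H z = y := Quotient.exists_rep y
    rw [hH.preimage_qmap_singleton]
    exact hplate _ ((hclUΩ.trans hΩclB).trans hBW) isClosed_closure z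
  refine ⟨interior U, isOpen_interior, mem_interior_iff_mem_nhds.2 hU,
    himage _ subset_rfl isClosed_closure, fun f hf => ?_⟩
  obtain rfl : f = (Set.mapsTo_image _ _).restrict _ _ _ := funext fun x => Subtype.ext (hf x)
  exact isProperMap_iff_isClosedMap_and_compact_fibers.1 <|
    isProperMap_restrict_image continuous_quotient_mk' isClosed_closure himage hfiber
end
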